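/- There is no 3-connected locally nonforesty graph of order 8k+1 (k ≥ 1) and size 15k+2. -/

import Mathlib

open SimpleGraph

def LocallyNonforesty {V : Type*} (G : SimpleGraph V) : Prop :=
  ∀ v : V, ¬ (G.induce (G.neighborSet v)).IsAcyclic

def ThreeConnected {V : Type*} [Fintype V] (G : SimpleGraph V) : Prop :=
  4 ≤ Fintype.card V ∧ ∀ S : Finset V, S.card ≤ 2 → (G.induce ((↑S : Set V)ᶜ)).Connected

/-!
Discharging. In a locally nonforesty graph every degree is at least 3, and the neighbourhood of a
vertex of degree 3 (a cubic vertex) is a triangle, so its closed neighbourhood is a `K₄`. With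
3-connectivity and more than five vertices, small separators show that cubic vertices are pairwise
nonadjacent, that a vertex with `a > 0` cubic neighbours has degree at least `a + 2`, and that a
vertex of degree 4 has at most one cubic neighbour. Hence the non-cubic vertices carry charges
`8 deg w - 30 - 2 a(w) ≥ 0` summing to `16|E| - 30|V|`, and every charge is 0 (degree 4, one cubic
neighbour), 2 (degree 4, no cubic neighbour) or at least 4.

If `8|E| = 15|V| + 1` (as for `|V| = 8k + 1`, `|E| = 15k + 2`), the charges sum to 2: one vertex
`w` has degree 4 and no cubic neighbour, every other non-cubic vertex has degree 4 and a cubic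
neighbour. A neighbour `x` of `w` with cubic neighbour `v` then has closed neighbourhood
`N[v] ∪ {w}`; a vertex of the cycle in `N(w)` with its two cycle neighbours fills up `N(v)`, so
`N(v) ⊆ N(w)` and `w` alone separates `N[v]`.
-/

open Finset

namespace SimpleGraph

variable {V : Type*} {G : SimpleGraph V}

lemma exists_adj_adj_ne_of_not_isAcyclic (h : ¬ G.IsAcyclic) :
    ∃ x y z, y ≠ z ∧ G.Adj x y ∧ G.Adj x z := by
  simp only [IsAcyclic, not_forall, not_not] at h
  obtain ⟨x, c, hc⟩ := h
  exact ⟨x, c.snd, c.penultimate, hc.snd_ne_penultimate, c.adj_snd hc.not_nil,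
    (c.adj_penultimate hc.not_nil).symm⟩

lemma three_le_card_of_not_isAcyclic [Fintype V] (h : ¬ G.IsAcyclic) : 3 ≤ Fintype.card V := by
  by_contra! hV
  exact h (.of_card_le_two (by rw [ENat.card_eq_coe_fintype_card]; exact_mod_cast (by omega)))

lemma three_le_card_edgeFinset_of_not_isAcyclic [Fintype G.edgeSet] (h : ¬ G.IsAcyclic) :
    3 ≤ #G.edgeFinset := by
  classical
  simp only [IsAcyclic, not_forall, not_not] at h
  obtain ⟨x, c, hc⟩ := h
  calc 3 ≤ c.length := hc.three_le_length
    _ = #c.edges.toFinset := by rw [List.toFinset_card_of_nodup hc.edges_nodup, c.length_edges]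
    _ ≤ #G.edgeFinset := card_le_card fun e he ↦
        mem_edgeFinset.2 (c.edges_subset_edgeSet (List.mem_toFinset.1 he))

lemma eq_top_of_not_isAcyclic_of_card_eq_three [Fintype V] (h : ¬ G.IsAcyclic)
    (hV : Fintype.card V = 3) : G = ⊤ := by
  classical
  refine edgeFinset_inj.1 (eq_of_subset_of_card_le (edgeFinset_mono le_top) ?_)
  rw [card_edgeFinset_top_eq_card_choose_two, hV]
  exact three_le_card_edgeFinset_of_not_isAcyclic h

lemma Preconnected.eq_univ_of_neighborSet_subset {C T : Set V}
    (h : (G.induce (T \ C)ᶜ).Preconnected) (hCT : C ⊆ T)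
    (hC : ∀ x ∈ C, G.neighborSet x ⊆ T) (hne : C.Nonempty) : T = Set.univ := by
  obtain ⟨a, ha⟩ := hne
  refine Set.eq_univ_of_forall fun z ↦ by_contra fun hz ↦ ?_
  obtain ⟨p⟩ := h ⟨a, fun haTC ↦ haTC.2 ha⟩ ⟨z, fun hzTC ↦ hz hzTC.1⟩
  obtain ⟨d, -, hd₁, hd₂⟩ :=
    p.exists_boundary_dart {x | x.1 ∈ C} ha fun hzC ↦ hz (hCT hzC)
  exact d.snd.2 ⟨hC _ hd₁ d.adj, hd₂⟩

end SimpleGraph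

section

variable {V : Type*} [Fintype V] {G : SimpleGraph V} [DecidableRel G.Adj]

theorem LocallyNonforesty.three_le_degree (hG : LocallyNonforesty G) (v : V) : 3 ≤ G.degree v :=
  G.card_neighborSet_eq_degree v ▸ three_le_card_of_not_isAcyclic (hG v)

theorem LocallyNonforesty.adj_of_degree_eq_three (hG : LocallyNonforesty G) {v a b : V}
    (hv : G.degree v = 3) (ha : G.Adj v a) (hb : G.Adj v b) (hab : a ≠ b) : G.Adj a b := by
  have htop := eq_top_of_not_isAcyclic_of_card_eq_three (hG v) (by rwa [card_neighborSet_eq_degree])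
  have hadj : (G.induce (G.neighborSet v)).Adj ⟨a, ha⟩ ⟨b, hb⟩ := by
    simpa [htop, Subtype.ext_iff] using hab
  exact hadj

variable [DecidableEq V]

theorem ThreeConnected.card_le_of_neighborFinset_subset (hG : ThreeConnected G) {C T : Finset V}
    (hCT : C ⊆ T) (hC : ∀ x ∈ C, G.neighborFinset x ⊆ T) (hTC : #(T \ C) ≤ 2)
    (hne : C.Nonempty) : Fintype.card V ≤ #T := by
  have hconn := (hG.2 (T \ C) hTC).preconnected
  rw [coe_sdiff] at hconn
  have hT := hconn.eq_univ_of_neighborSet_subset (coe_subset.2 hCT)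
    (fun x hx ↦ by simpa [← coe_neighborFinset] using hC x hx) (coe_nonempty.2 hne)
  rw [coe_eq_univ.1 hT, card_univ]

theorem LocallyNonforesty.insert_neighborFinset_subset (hG : LocallyNonforesty G) {v w : V}
    (hv : G.degree v = 3) (hvw : G.Adj v w) :
    insert v (G.neighborFinset v) ⊆ insert w (G.neighborFinset w) := by
  intro x hx
  rw [mem_insert, mem_neighborFinset] at hx ⊢
  rcases hx with rfl | hx
  · exact .inr hvw.symm
  · exact (eq_or_ne x w).imp_right (hG.adj_of_degree_eq_three hv hvw hx ∘ Ne.symm)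

variable (G) in
def cubicVerts : Finset V := {v | G.degree v = 3}

variable (G) in
def cubicNbrs (w : V) : Finset V := G.neighborFinset w ∩ cubicVerts G

lemma mem_cubicNbrs {v w : V} : v ∈ cubicNbrs G w ↔ G.Adj w v ∧ G.degree v = 3 := by
  simp [cubicNbrs, cubicVerts]

lemma SimpleGraph.card_insert_neighborFinset (v : V) :
    #(insert v (G.neighborFinset v)) = G.degree v + 1 := by
  rw [card_insert_of_notMem (notMem_neighborFinset_self G v), card_neighborFinset_eq_degree]

theorem LocallyNonforesty.cubicNbrs_eq_empty (hG : LocallyNonforesty G) (h3 : ThreeConnected G)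
    (hn : 5 < Fintype.card V) {u : V} (hu : G.degree u = 3) : cubicNbrs G u = ∅ := by
  refine eq_empty_of_forall_notMem fun v hv ↦ ?_
  obtain ⟨huv, hv⟩ := mem_cubicNbrs.1 hv
  have hNu : #(insert u (G.neighborFinset u)) = 4 := by rw [card_insert_neighborFinset, hu]
  have heq : insert u (G.neighborFinset u) = insert v (G.neighborFinset v) :=
    eq_of_subset_of_card_le (hG.insert_neighborFinset_subset hu huv)
      (by rw [hNu, card_insert_neighborFinset, hv])
  have := h3.card_le_of_neighborFinset_subset (C := {u, v}) (T := insert u (G.neighborFinset u))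
    (by simp [insert_subset_iff, huv]) ?_ ?_ (insert_nonempty _ _)
  · omega
  · simp only [mem_insert, mem_singleton, forall_eq_or_imp, forall_eq]
    exact ⟨subset_insert _ _, heq ▸ subset_insert _ _⟩
  · rw [card_sdiff_of_subset (by simp [insert_subset_iff, huv]), hNu, card_pair huv.ne]

theorem LocallyNonforesty.card_cubicNbrs_add_two_le (hG : LocallyNonforesty G)
    (h3 : ThreeConnected G) (hn : 5 < Fintype.card V) {w : V} (hw : (cubicNbrs G w).Nonempty) :
    #(cubicNbrs G w) + 2 ≤ G.degree w := by
  obtain ⟨v, hv⟩ := hw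
  obtain ⟨hwv, hv3⟩ := mem_cubicNbrs.1 hv
  have hdisj : Disjoint (cubicNbrs G w) ((G.neighborFinset v).erase w) := by
    refine disjoint_left.2 fun x hx hx' ↦ ?_
    have hx : x ∈ cubicNbrs G v := mem_cubicNbrs.2
      ⟨(mem_neighborFinset _ _ _).1 (mem_of_mem_erase hx'), (mem_cubicNbrs.1 hx).2⟩
    simp [hG.cubicNbrs_eq_empty h3 hn hv3] at hx
  have hsub : cubicNbrs G w ∪ (G.neighborFinset v).erase w ⊆ G.neighborFinset w := by
    refine union_subset inter_subset_left fun x hx ↦ ?_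
    have := hG.insert_neighborFinset_subset hv3 hwv.symm (mem_insert_of_mem (mem_of_mem_erase hx))
    exact (mem_insert.1 this).resolve_left (ne_of_mem_erase hx)
  calc #(cubicNbrs G w) + 2 = #(cubicNbrs G w ∪ (G.neighborFinset v).erase w) := by
        rw [card_union_of_disjoint hdisj, card_erase_of_mem (by simpa using hwv.symm),
          card_neighborFinset_eq_degree, hv3]
    _ ≤ G.degree w := card_neighborFinset_eq_degree G w ▸ card_le_card hsub

theorem LocallyNonforesty.card_cubicNbrs_le_one (hG : LocallyNonforesty G) (h3 : ThreeConnected G)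
    (hn : 5 < Fintype.card V) {w : V} (hw : G.degree w = 4) : #(cubicNbrs G w) ≤ 1 := by
  by_contra! h
  obtain ⟨v, hv, v', hv', hne⟩ := one_lt_card.1 h
  obtain ⟨hwv, hv3⟩ := mem_cubicNbrs.1 hv
  obtain ⟨hwv', hv3'⟩ := mem_cubicNbrs.1 hv'
  have := h3.card_le_of_neighborFinset_subset (C := {w, v, v'}) (T := insert w (G.neighborFinset w))
    (by simp [insert_subset_iff, hwv, hwv']) ?_ ?_ (insert_nonempty _ _)
  · rw [card_insert_neighborFinset, hw] at this
    omega
  · simp only [mem_insert, mem_singleton, forall_eq_or_imp, forall_eq]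
    exact ⟨subset_insert _ _,
      (subset_insert _ _).trans (hG.insert_neighborFinset_subset hv3 hwv.symm),
      (subset_insert _ _).trans (hG.insert_neighborFinset_subset hv3' hwv'.symm)⟩
  · calc #(insert w (G.neighborFinset w) \ {w, v, v'})
        ≤ #(G.neighborFinset w \ {v, v'}) := card_le_card fun x ↦ by
          simp only [mem_sdiff, mem_insert, mem_singleton]
          tauto
      _ = 2 := by
        rw [card_sdiff_of_subset (by simp [insert_subset_iff, hwv, hwv']),
          card_neighborFinset_eq_degree, hw, card_pair hne]

lemma sum_card_cubicNbrs : ∑ w, #(cubicNbrs G w) = 3 * #(cubicVerts G) := by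
  calc ∑ w, #(cubicNbrs G w) = ∑ v ∈ cubicVerts G, #(univ.bipartiteBelow G.Adj v) := by
        rw [← sum_card_bipartiteAbove_eq_sum_card_bipartiteBelow]
        congr! 2 with w
        ext v
        simp [cubicNbrs, bipartiteAbove, and_comm]
    _ = ∑ v ∈ cubicVerts G, 3 := sum_congr rfl fun v hv ↦ by
        rw [← (mem_filter.1 hv).2, ← card_neighborFinset_eq_degree]
        congr 1
        ext
        simp [bipartiteBelow, adj_comm]
    _ = 3 * #(cubicVerts G) := by rw [sum_const, smul_eq_mul, mul_comm]

-- The charge `8 deg - 30` of a cubic vertex is `-6`, handed out as `-2` to each neighbour.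
variable (G) in
def charge (w : V) : ℤ := 8 * G.degree w - 30 - 2 * #(cubicNbrs G w)

theorem LocallyNonforesty.sum_compl_cubicVerts_charge (hG : LocallyNonforesty G)
    (h3 : ThreeConnected G) (hn : 5 < Fintype.card V) :
    ∑ w ∈ (cubicVerts G)ᶜ, charge G w = 16 * #G.edgeFinset - 30 * Fintype.card V := by
  have htotal : ∑ w, charge G w =
      16 * #G.edgeFinset - 30 * Fintype.card V - 6 * #(cubicVerts G) := by
    simp only [charge, sum_sub_distrib, ← mul_sum, sum_const, card_univ, nsmul_eq_mul]
    rw [← Nat.cast_sum, ← Nat.cast_sum, sum_degrees_eq_twice_card_edges, sum_card_cubicNbrs]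
    push_cast
    ring
  have hcubic : ∑ w ∈ cubicVerts G, charge G w = -6 * #(cubicVerts G) := by
    rw [sum_congr rfl fun w hw ↦ show charge G w = -6 by
      have hw : G.degree w = 3 := (mem_filter.1 hw).2
      simp [charge, hw, hG.cubicNbrs_eq_empty h3 hn hw]]
    simp [mul_comm]
  linarith [sum_add_sum_compl (cubicVerts G) (charge G)]

theorem LocallyNonforesty.charge_cases (hG : LocallyNonforesty G) (h3 : ThreeConnected G)
    (hn : 5 < Fintype.card V) {w : V} (hw : G.degree w ≠ 3) :
    (charge G w = 0 ∧ G.degree w = 4 ∧ #(cubicNbrs G w) = 1) ∨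
      (charge G w = 2 ∧ G.degree w = 4 ∧ cubicNbrs G w = ∅) ∨ 4 ≤ charge G w := by
  have hdeg := hG.three_le_degree w
  have hpos : 0 < #(cubicNbrs G w) → _ := hG.card_cubicNbrs_add_two_le h3 hn ∘ card_pos.1
  have hfour : G.degree w = 4 → _ := hG.card_cubicNbrs_le_one h3 hn
  rw [← card_eq_zero, charge]
  omega

theorem ThreeConnected.not_forall_neighborFinset_subset_insert (h3 : ThreeConnected G)
    (hn : 5 < Fintype.card V) {v : V} (hv : G.degree v = 3) (w : V) :
    ¬ ∀ c ∈ G.neighborFinset v,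
      G.neighborFinset c ⊆ insert w (insert v (G.neighborFinset v)) := by
  intro h
  have hT := card_insert_le w (insert v (G.neighborFinset v))
  rw [card_insert_neighborFinset, hv] at hT
  have := h3.card_le_of_neighborFinset_subset (subset_insert w (insert v (G.neighborFinset v)))
    ?_ ?_ (insert_nonempty _ _)
  · omega
  · intro c hc
    rcases mem_insert.1 hc with rfl | hc
    · exact (subset_insert _ _).trans (subset_insert _ _)
    · exact h c hc
  · rw [card_sdiff_of_subset (subset_insert _ _), card_insert_neighborFinset, hv]
    omega

theorem LocallyNonforesty.insert_neighborFinset_eq (hG : LocallyNonforesty G) {c v w : V}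
    (hc : G.degree c = 4) (hv : G.degree v = 3) (hcv : G.Adj c v) (hcw : G.Adj c w)
    (hw : w ∉ insert v (G.neighborFinset v)) :
    insert c (G.neighborFinset c) = insert w (insert v (G.neighborFinset v)) := by
  have hsub : insert w (insert v (G.neighborFinset v)) ⊆ insert c (G.neighborFinset c) :=
    insert_subset (mem_insert_of_mem ((mem_neighborFinset _ _ _).2 hcw))
      (hG.insert_neighborFinset_subset hv hcv.symm)
  refine (eq_of_subset_of_card_le hsub ?_).symm
  rw [card_insert_of_notMem hw, card_insert_neighborFinset, card_insert_neighborFinset, hc, hv]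

theorem LocallyNonforesty.not_forall_adj_degree_eq_four (hG : LocallyNonforesty G)
    (h3 : ThreeConnected G) (hn : 5 < Fintype.card V) {w : V} (hw : G.degree w ≠ 3)
    (hw0 : cubicNbrs G w = ∅) :
    ¬ ∀ c, G.Adj w c → G.degree c = 4 ∧ (cubicNbrs G c).Nonempty := by
  intro hnbr
  have hfar : ∀ v, G.degree v = 3 → w ∉ insert v (G.neighborFinset v) := by
    intro v hv hwv
    rcases mem_insert.1 hwv with rfl | hwv
    · exact hw hv
    · have : v ∈ cubicNbrs G w :=
        mem_cubicNbrs.2 ⟨((mem_neighborFinset _ _ _).1 hwv).symm, hv⟩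
      simp [hw0] at this
  have hsplit : ∀ c v, G.Adj w c → v ∈ cubicNbrs G c →
      insert c (G.neighborFinset c) = insert w (insert v (G.neighborFinset v)) := by
    intro c v hc hv
    obtain ⟨hcv, hv3⟩ := mem_cubicNbrs.1 hv
    exact hG.insert_neighborFinset_eq (hnbr c hc).1 hv3 hcv hc.symm (hfar v hv3)
  obtain ⟨⟨x, hx⟩, ⟨y, hy⟩, ⟨z, hz⟩, hyz, hxy, hxz⟩ :=
    exists_adj_adj_ne_of_not_isAcyclic (hG w)
  simp only [comap_adj, Function.Embedding.subtype_apply, ne_eq, Subtype.mk.injEq] at hxy hxz hyz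
  obtain ⟨v, hvx⟩ := (hnbr x hx).2
  obtain ⟨hxv, hv3⟩ := mem_cubicNbrs.1 hvx
  have hmem : ∀ u, G.Adj w u → G.Adj x u → G.Adj v u := by
    intro u hu hxu
    have := hsplit x v hx hvx ▸ mem_insert_of_mem ((mem_neighborFinset _ _ _).2 hxu)
    rcases mem_insert.1 this with rfl | this
    · exact (hu.ne rfl).elim
    · refine (mem_neighborFinset _ _ _).1 ((mem_insert.1 this).resolve_left ?_)
      rintro rfl
      exact hfar u hv3 (mem_insert_of_mem ((mem_neighborFinset _ _ _).2 hu.symm))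
  have hNv : G.neighborFinset v = {x, y, z} := by
    refine (eq_of_subset_of_card_le ?_ ?_).symm
    · simp [insert_subset_iff, hxv.symm, hmem y hy hxy, hmem z hz hxz]
    · rw [card_neighborFinset_eq_degree, hv3, card_insert_of_notMem (by simp [hxy.ne, hxz.ne]),
        card_pair hyz]
  refine h3.not_forall_neighborFinset_subset_insert hn hv3 w fun c hc ↦ ?_
  have hwc : G.Adj w c := by
    rw [hNv, mem_insert, mem_insert, mem_singleton] at hc
    rcases hc with rfl | rfl | rfl <;> assumption
  rw [← hsplit c v hwc (mem_cubicNbrs.2 ⟨((mem_neighborFinset _ _ _).1 hc).symm, hv3⟩)]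
  exact subset_insert _ _

theorem LocallyNonforesty.exists_cubicNbrs_eq_empty_of_sum_charge_eq_two
    (hG : LocallyNonforesty G) (h3 : ThreeConnected G) (hn : 5 < Fintype.card V)
    (hsum : ∑ w ∈ (cubicVerts G)ᶜ, charge G w = 2) :
    ∃ w, G.degree w = 4 ∧ cubicNbrs G w = ∅ ∧
      ∀ u ≠ w, G.degree u ≠ 3 → G.degree u = 4 ∧ (cubicNbrs G u).Nonempty := by
  set B := (cubicVerts G)ᶜ
  have hcases := fun w (hw : w ∈ B) ↦ hG.charge_cases h3 hn (by simpa [B, cubicVerts] using hw)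
  have hnonneg : ∀ w ∈ B, 0 ≤ charge G w := fun w hw ↦ by
    rcases hcases w hw with h | h | h <;> omega
  obtain ⟨w, hwB, hw⟩ := exists_ne_zero_of_sum_ne_zero (hsum ▸ two_ne_zero)
  have hsum_split := add_sum_erase B (charge G) hwB
  have hrest_nonneg : ∀ u ∈ B.erase w, 0 ≤ charge G u :=
    fun u hu ↦ hnonneg u (mem_of_mem_erase hu)
  have hrest_sum_nonneg := sum_nonneg hrest_nonneg
  obtain ⟨hw4, hw0, hrest⟩ : G.degree w = 4 ∧ cubicNbrs G w = ∅ ∧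
      ∑ u ∈ B.erase w, charge G u = 0 := by
    rcases hcases w hwB with h | h | h <;> first | omega | exact ⟨h.2.1, h.2.2, by omega⟩
  refine ⟨w, hw4, hw0, fun u huw hu ↦ ?_⟩
  have huB : u ∈ B.erase w := mem_erase.2 ⟨huw, by simpa [B, cubicVerts] using hu⟩
  have hu0 := (sum_eq_zero_iff_of_nonneg hrest_nonneg).1 hrest u huB
  rcases hcases u (mem_of_mem_erase huB) with h | h | h
  · exact ⟨h.2.1, card_pos.1 (by omega)⟩
  all_goals omega

theorem LocallyNonforesty.eight_mul_card_edgeFinset_ne (hG : LocallyNonforesty G)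
    (h3 : ThreeConnected G) (hn : 5 < Fintype.card V) :
    8 * #G.edgeFinset ≠ 15 * Fintype.card V + 1 := by
  intro hm
  obtain ⟨w, hw4, hw0, hrest⟩ := hG.exists_cubicNbrs_eq_empty_of_sum_charge_eq_two h3 hn
    (by rw [hG.sum_compl_cubicVerts_charge h3 hn]; omega)
  refine hG.not_forall_adj_degree_eq_four h3 hn (by omega) hw0 fun c hc ↦ hrest c hc.ne.symm ?_
  intro hc3
  have : c ∈ cubicNbrs G w := mem_cubicNbrs.2 ⟨hc, hc3⟩
  simp [hw0] at this

end

theorem stmt11_general (k : ℕ) :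
    ¬ ∃ G : SimpleGraph (Fin (8 * k + 1)), ThreeConnected G ∧ LocallyNonforesty G ∧
      G.edgeSet.ncard = 15 * k + 2 := by
  rintro ⟨G, h3, hG, hm⟩
  classical
  have hn : 5 < Fintype.card (Fin (8 * k + 1)) := by
    have := h3.1
    rw [Fintype.card_fin] at this ⊢
    omega
  have hm' : #G.edgeFinset = 15 * k + 2 := by
    rw [← hm, ← coe_edgeFinset, Set.ncard_coe_finset]
  exact hG.eight_mul_card_edgeFinset_ne h3 hn (by rw [hm', Fintype.card_fin]; ring)

theorem stmt11 (k : ℕ) (hk : 1 ≤ k) :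
    ¬ ∃ G : SimpleGraph (Fin (8 * k + 1)), ThreeConnected G ∧ LocallyNonforesty G ∧
      G.edgeSet.ncard = 15 * k + 2 :=
  stmt11_general k
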